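/- The diversity order of XP-HARQ with K transmissions equals K: if P_1 = ⋯ = P_K = γ̄·σ², then as γ̄ → ∞, −log(P_out,K)/log(γ̄) → K. -/

import Mathlib

/-!
Write `r = 1/γ̄` for the common rate. Almost every sample has nonnegative coordinates, and
on the nonnegative orthant the outage event contains the box `∏ [0, b_l]` with
`b_l = (2^{R_l} - 1)/2` and lies inside the box `∏ [0, 2^{R_i^Σ} - 1]`. The product of
exponential laws gives a box `∏ (-∞, c_i]` the mass `∏ (1 - e^{-r c_i})`, which for `r ≤ 1`
lies between `r^K ∏ c_i e^{-c_i}` and `r^K ∏ c_i`. So `P_out,K` is squeezed between two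
positive multiples of `γ̄^{-K}`, and `-log P_out,K / log γ̄ → K`.
-/

open MeasureTheory ProbabilityTheory Real Filter

/-- The XP-HARQ outage probability after `K` rounds,
`P_out,K = Pr(∀ k, Σ_{l=1}^k log₂(1+γ_l) < Σ_{l=1}^k R_l)`, where the `γ_l` are
independent exponential random variables with rates `σ²/P_l`, realized canonically
on `Fin K → ℝ` with the product of exponential measures. -/
noncomputable def poutK (σ2 : ℝ) {K : ℕ} (P R : Fin K → ℝ) : ℝ :=
  ((Measure.pi fun k : Fin K => expMeasure (σ2 / P k))
    {x : Fin K → ℝ | ∀ k : Fin K,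
      ∑ l ∈ Finset.Iic k, Real.logb 2 (1 + x l)
        < ∑ l ∈ Finset.Iic k, R l}).toReal

open Set Topology

lemma Real.mul_exp_neg_le_one_sub_exp_neg (t : ℝ) : t * exp (-t) ≤ 1 - exp (-t) := by
  have h := mul_le_mul_of_nonneg_right (add_one_le_exp t) (exp_pos (-t)).le
  rw [← exp_add, add_neg_cancel, exp_zero] at h
  linarith

lemma Real.logb_one_add_lt_iff {b x y : ℝ} (hb : 1 < b) (hx : 0 ≤ x) :
    logb b (1 + x) < y ↔ x < b ^ y - 1 := by
  rw [logb_lt_iff_lt_rpow hb (by linarith)]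
  constructor <;> intro h <;> linarith

lemma Real.log_mul_rpow_neg {c s : ℝ} (hc : 0 < c) (hs : 0 < s) (d : ℝ) :
    log (c * s ^ (-d)) = log c - d * log s := by
  rw [log_mul hc.ne' (rpow_pos_of_pos hs _).ne', log_rpow hs]
  ring

lemma tendsto_neg_log_div_log_of_le_of_le {q : ℝ → ℝ} {d c₁ c₂ : ℝ} (hc₁ : 0 < c₁)
    (hq : ∀ᶠ s in atTop, c₁ * s ^ (-d) ≤ q s ∧ q s ≤ c₂ * s ^ (-d)) :
    Tendsto (fun s => -log (q s) / log s) atTop (𝓝 d) := by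
  have hlim (c : ℝ) : Tendsto (fun s => (d * log s - log c) / log s) atTop (𝓝 d) := by
    have h := (tendsto_const_nhds (x := d)).sub
      ((tendsto_const_nhds (x := log c)).div_atTop tendsto_log_atTop)
    rw [sub_zero] at h
    refine h.congr' ?_
    filter_upwards [eventually_gt_atTop 1] with s hs
    field_simp [(log_pos hs).ne']
  have hlog_q : ∀ᶠ s in atTop, 0 < log s ∧
      d * log s - log c₂ ≤ -log (q s) ∧ -log (q s) ≤ d * log s - log c₁ := by
    filter_upwards [hq, eventually_gt_atTop 1] with s ⟨hlow, hup⟩ hs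
    have hpow : 0 < s ^ (-d) := rpow_pos_of_pos (by linarith) _
    have hq_pos : 0 < q s := (mul_pos hc₁ hpow).trans_le hlow
    have hc₂ : 0 < c₂ := (mul_pos_iff_of_pos_right hpow).mp (hq_pos.trans_le hup)
    have hlow' := log_le_log (mul_pos hc₁ hpow) hlow
    have hup' := log_le_log hq_pos hup
    rw [log_mul_rpow_neg hc₁ (by linarith)] at hlow'
    rw [log_mul_rpow_neg hc₂ (by linarith)] at hup'
    exact ⟨log_pos hs, by linarith, by linarith⟩
  refine tendsto_of_tendsto_of_tendsto_of_le_of_le' (hlim c₂) (hlim c₁) ?_ ?_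
  all_goals
    filter_upwards [hlog_q] with s ⟨hlog, hlow, hup⟩
    gcongr

section ExpMeasure

variable {ι : Type*} [Fintype ι] {r : ℝ}

lemma expMeasure_Iic (hr : 0 < r) {x : ℝ} (hx : 0 ≤ x) :
    expMeasure r (Iic x) = ENNReal.ofReal (1 - exp (-(r * x))) := by
  have := isProbabilityMeasure_expMeasure hr
  rw [← ofReal_cdf, cdf_expMeasure_eq hr, if_pos hx]

lemma ae_nonneg_expMeasure (hr : 0 < r) : ∀ᵐ x ∂expMeasure r, 0 ≤ x := by
  rw [ae_iff]
  have hsub : {x : ℝ | ¬0 ≤ x} ⊆ Iic 0 := fun x hx => (not_le.mp hx).le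
  refine measure_mono_null hsub ?_
  simp [expMeasure_Iic hr le_rfl]

lemma ae_nonneg_pi_expMeasure (hr : 0 < r) :
    ∀ᵐ x ∂Measure.pi fun _ : ι => expMeasure r, ∀ i, 0 ≤ x i := by
  have := isProbabilityMeasure_expMeasure hr
  exact eventually_all.mpr fun i =>
    Measure.tendsto_eval_ae_ae.eventually (ae_nonneg_expMeasure hr)

lemma pi_expMeasure_mono_of_nonneg (hr : 0 < r) {s t : Set (ι → ℝ)}
    (h : ∀ x, (∀ i, 0 ≤ x i) → x ∈ s → x ∈ t) :
    (Measure.pi fun _ : ι => expMeasure r) s ≤ (Measure.pi fun _ : ι => expMeasure r) t :=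
  measure_mono_ae <| (ae_nonneg_pi_expMeasure hr).mono h

lemma toReal_pi_expMeasure_pi_Iic (hr : 0 < r) {c : ι → ℝ} (hc : ∀ i, 0 ≤ c i) :
    ((Measure.pi fun _ : ι => expMeasure r) (univ.pi fun i => Iic (c i))).toReal
      = ∏ i, (1 - exp (-(r * c i))) := by
  have := isProbabilityMeasure_expMeasure hr
  rw [Measure.pi_pi, ENNReal.toReal_prod]
  refine Finset.prod_congr rfl fun i _ => ?_
  rw [expMeasure_Iic hr (hc i), ENNReal.toReal_ofReal]
  rw [sub_nonneg, exp_le_one_iff, neg_nonpos]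
  exact mul_nonneg hr.le (hc i)

lemma pow_mul_prod_le_prod_one_sub_exp_neg (hr₀ : 0 ≤ r) (hr₁ : r ≤ 1) {c : ι → ℝ}
    (hc : ∀ i, 0 ≤ c i) :
    r ^ Fintype.card ι * ∏ i, c i * exp (-c i) ≤ ∏ i, (1 - exp (-(r * c i))) := by
  rw [← Finset.card_univ, ← Finset.prod_const, ← Finset.prod_mul_distrib]
  refine Finset.prod_le_prod (fun i _ => by have := hc i; positivity) fun i _ => ?_
  calc r * (c i * exp (-c i)) ≤ r * c i * exp (-(r * c i)) := by
        rw [← mul_assoc]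
        gcongr
        · nlinarith [hc i]
        · nlinarith [hc i]
    _ ≤ 1 - exp (-(r * c i)) := mul_exp_neg_le_one_sub_exp_neg _

lemma prod_one_sub_exp_neg_le_pow_mul_prod (hr : 0 ≤ r) {c : ι → ℝ} (hc : ∀ i, 0 ≤ c i) :
    ∏ i, (1 - exp (-(r * c i))) ≤ r ^ Fintype.card ι * ∏ i, c i := by
  rw [← Finset.card_univ, ← Finset.prod_const, ← Finset.prod_mul_distrib]
  refine Finset.prod_le_prod (fun i _ => ?_) fun i _ => ?_
  · rw [sub_nonneg, exp_le_one_iff, neg_nonpos]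
    exact mul_nonneg hr (hc i)
  · linarith [one_sub_le_exp_neg (r * c i)]

end ExpMeasure

section Outage

variable {ι : Type*} [Preorder ι] [LocallyFiniteOrderBot ι]

def outageSet (R : ι → ℝ) : Set (ι → ℝ) :=
  {x | ∀ k, ∑ l ∈ Finset.Iic k, logb 2 (1 + x l) < ∑ l ∈ Finset.Iic k, R l}

lemma mem_outageSet_of_le {R b x : ι → ℝ} (hb : ∀ l, b l < 2 ^ R l - 1)
    (hx₀ : ∀ l, 0 ≤ x l) (hx : x ∈ univ.pi fun l => Iic (b l)) : x ∈ outageSet R := fun k =>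
  Finset.sum_lt_sum_of_nonempty ⟨k, Finset.mem_Iic.mpr le_rfl⟩ fun l _ =>
    (logb_one_add_lt_iff one_lt_two (hx₀ l)).mpr ((hx l (mem_univ l)).trans_lt (hb l))

lemma le_of_mem_outageSet {R x : ι → ℝ} (hx₀ : ∀ l, 0 ≤ x l) (hx : x ∈ outageSet R) :
    x ∈ univ.pi fun i => Iic (2 ^ (∑ l ∈ Finset.Iic i, R l) - 1) := by
  intro i _
  have hterm : logb 2 (1 + x i) ≤ ∑ l ∈ Finset.Iic i, logb 2 (1 + x l) :=
    Finset.single_le_sum (f := fun l => logb 2 (1 + x l))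
      (fun l _ => logb_nonneg one_lt_two (by linarith [hx₀ l])) (Finset.mem_Iic.mpr le_rfl)
  exact ((logb_one_add_lt_iff one_lt_two (hx₀ i)).mp (hterm.trans_lt (hx i))).le

lemma pi_expMeasure_outageSet_bounds [Fintype ι] {R : ι → ℝ} (hR : ∀ l, 0 < R l) :
    ∃ c₁ c₂ : ℝ, 0 < c₁ ∧ ∀ r, 0 < r → r ≤ 1 →
      c₁ * r ^ Fintype.card ι
          ≤ ((Measure.pi fun _ : ι => expMeasure r) (outageSet R)).toReal ∧
        ((Measure.pi fun _ : ι => expMeasure r) (outageSet R)).toReal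
          ≤ c₂ * r ^ Fintype.card ι := by
  set b : ι → ℝ := fun l => (2 ^ R l - 1) / 2
  set C : ι → ℝ := fun i => 2 ^ (∑ l ∈ Finset.Iic i, R l) - 1
  have hb_pos (l : ι) : 0 < b l := by
    have := one_lt_rpow one_lt_two (hR l)
    simp only [b]
    linarith
  have hb_lt (l : ι) : b l < 2 ^ R l - 1 := by
    have := hb_pos l
    simp only [b] at this ⊢
    linarith
  have hC (i : ι) : 0 ≤ C i :=
    sub_nonneg.mpr (one_le_rpow one_le_two (Finset.sum_nonneg fun l _ => (hR l).le))
  refine ⟨∏ l, b l * exp (-b l), ∏ i, C i,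
    Finset.prod_pos fun l _ => mul_pos (hb_pos l) (exp_pos _), fun r hr hr₁ => ⟨?_, ?_⟩⟩
  all_goals have := isProbabilityMeasure_expMeasure hr
  · calc (∏ l, b l * exp (-b l)) * r ^ Fintype.card ι
        ≤ ∏ l, (1 - exp (-(r * b l))) := by
          rw [mul_comm]
          exact pow_mul_prod_le_prod_one_sub_exp_neg hr.le hr₁ fun l => (hb_pos l).le
      _ = ((Measure.pi fun _ : ι => expMeasure r) (univ.pi fun l => Iic (b l))).toReal :=
          (toReal_pi_expMeasure_pi_Iic hr fun l => (hb_pos l).le).symm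
      _ ≤ ((Measure.pi fun _ : ι => expMeasure r) (outageSet R)).toReal :=
          ENNReal.toReal_mono (measure_ne_top _ _) <|
            pi_expMeasure_mono_of_nonneg hr fun _ => mem_outageSet_of_le hb_lt
  · calc ((Measure.pi fun _ : ι => expMeasure r) (outageSet R)).toReal
        ≤ ((Measure.pi fun _ : ι => expMeasure r) (univ.pi fun i => Iic (C i))).toReal :=
          ENNReal.toReal_mono (measure_ne_top _ _) <|
            pi_expMeasure_mono_of_nonneg hr fun _ => le_of_mem_outageSet
      _ = ∏ i, (1 - exp (-(r * C i))) := toReal_pi_expMeasure_pi_Iic hr hC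
      _ ≤ (∏ i, C i) * r ^ Fintype.card ι := by
          rw [mul_comm]
          exact prod_one_sub_exp_neg_le_pow_mul_prod hr.le hC

end Outage

theorem diversity_order_K_general
    (K : ℕ) (σ2 : ℝ) (hσ : 0 < σ2)
    (R : Fin K → ℝ) (hR : ∀ k, 0 < R k) :
    Filter.Tendsto
      (fun snr : ℝ =>
        - Real.log (poutK σ2 (fun _ : Fin K => snr * σ2) R) / Real.log snr)
      Filter.atTop (nhds (K : ℝ)) := by
  obtain ⟨c₁, c₂, hc₁, hbounds⟩ := pi_expMeasure_outageSet_bounds hR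
  refine tendsto_neg_log_div_log_of_le_of_le (c₂ := c₂) hc₁ ?_
  filter_upwards [eventually_ge_atTop 1] with snr hsnr
  have hsnr₀ : 0 < snr := by linarith
  have hrate : σ2 / (snr * σ2) = snr⁻¹ := by field_simp [hσ.ne']
  have hpow : snr ^ (-(K : ℝ)) = snr⁻¹ ^ K := by
    rw [rpow_neg hsnr₀.le, rpow_natCast, inv_pow]
  rw [poutK, hrate, hpow]
  have h := hbounds snr⁻¹ (inv_pos.mpr hsnr₀) (inv_le_one_of_one_le₀ hsnr)
  rwa [Fintype.card_fin] at h

/-- The diversity order of XP-HARQ with `K` transmissions equals `K`: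
with `P₁ = ⋯ = P_K = γ̄·σ²`, as `γ̄ → ∞`, `−log(P_out,K)/log(γ̄) → K`. -/
theorem diversity_order_K
    (K : ℕ) (hK : 1 ≤ K) (σ2 : ℝ) (hσ : 0 < σ2)
    (R : Fin K → ℝ) (hR : ∀ k, 0 < R k) :
    Filter.Tendsto
      (fun snr : ℝ =>
        - Real.log (poutK σ2 (fun _ : Fin K => snr * σ2) R) / Real.log snr)
      Filter.atTop (nhds (K : ℝ)) :=
  diversity_order_K_general K σ2 hσ R hR
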